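/- Linear fractional transformation of M-functions under change of boundary condition: Let α, γ ∈ ℂ^{m×2m} satisfy αα*=I_m, αJα*=0, γγ*=I_m, γJγ*=0. Let Ψ_α̃, Ψ_γ̃ be the fundamental solutions normalized by Ψ̂_α̃(z,k₀) = I_ρ(k₀)^{-1/2}(α* Jα*) and Ψ̂_γ̃(z,k₀) = I_ρ(k₀)^{-1/2}(γ* Jγ*). Then, whenever the relevant inverses exist, the corresponding M-functions M_α̃ = M(z,ℓ,k₀,α̃,β̃) and M_γ̃ = M(z,ℓ,k₀,γ̃,β̃) (same β at ℓ) are related by M_α̃ = [−αJγ* + αγ* M_γ̃][αγ* + αJγ* M_γ̃]^{-1}. -/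

import Mathlib

open Matrix ComplexOrder

/-- The standard 2m×2m symplectic matrix J = [[0, I], [-I, 0]]. -/
def Jmat (m : ℕ) : Matrix (Fin m ⊕ Fin m) (Fin m ⊕ Fin m) ℂ :=
  Matrix.fromBlocks 0 1 (-1) 0

/-- The square root of a positive semidefinite matrix, as defined in the older Mathlib
(removed since). -/
noncomputable def Matrix.PosSemidef.sqrt {n 𝕜 : Type*} [Fintype n] [DecidableEq n] [RCLike 𝕜]
    {A : Matrix n n 𝕜} (hA : A.PosSemidef) : Matrix n n 𝕜 :=
  hA.1.eigenvectorUnitary.1 * diagonal ((↑) ∘ Real.sqrt ∘ hA.1.eigenvalues) *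
    (star hA.1.eigenvectorUnitary : Matrix n n 𝕜)

/-!
The fundamental solutions for the boundary data `α` and `γ` differ by the constant right factor
`T = [[αγ*, αJγ*], [-αJγ*, αγ*]]`. At `k₀` this is the identity `(α*, Jα*) T = (γ*, Jγ*)`, which
holds because `(α; -αJ)` is the inverse of `(α*, Jα*)`; it propagates to `ℓ` because the
recursion is linear and, with invertible off-diagonal blocks, a solution is determined by its
state at a single point. Multiplying the states at `ℓ` by `β I_ρ(ℓ)^{1/2}` gives
`(V_γ, W_γ) = (V_α, W_α) T`, and solving `W_γ M_γ = -V_γ` for `V_α` yields the formula.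
-/

namespace Matrix

theorem fromRows_sub {R m₁ m₂ n : Type*} [Sub R] (A₁ B₁ : Matrix m₁ n R)
    (A₂ B₂ : Matrix m₂ n R) :
    fromRows (A₁ - B₁) (A₂ - B₂) = fromRows A₁ A₂ - fromRows B₁ B₂ := by
  ext (_ | _) _ <;> rfl

theorem fromRows_fromCols_eq_fromCols_fromRows {R m₁ m₂ n₁ n₂ : Type*} (A₁ : Matrix m₁ n₁ R)
    (B₁ : Matrix m₁ n₂ R) (A₂ : Matrix m₂ n₁ R) (B₂ : Matrix m₂ n₂ R) :
    fromRows (fromCols A₁ B₁) (fromCols A₂ B₂) = fromCols (fromRows A₁ A₂) (fromRows B₁ B₂) := by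
  rw [fromRows_fromCols_eq_fromBlocks, fromCols_fromRows_eq_fromBlocks]

variable {R : Type*} [CommRing R] {ι ν ν' : Type*} [Fintype ι]

theorem eq_zero_of_isUnit_of_mul_eq_zero [DecidableEq ι] {M : Matrix ι ι R} {X : Matrix ι ν R}
    (hM : IsUnit M) (h : M * X = 0) : X = 0 := by
  have := hM.invertible
  exact mul_right_injective_of_invertible M (by simpa using h)

/-- `(X₁, X₂)` solves `ρ k X₂(k+1) = C₁₁ X₁ k + C₁₂ X₂ k`, `ρ (k-1) X₁(k-1) = C₂₁ X₁ k + C₂₂ X₂ k`;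
its state at `k` is `fromRows (X₁ k) (X₂ (k + 1))`. -/
def SolvesRecursion (ρ : ℤ → Matrix ι ι R) (C : ℤ → Matrix (ι ⊕ ι) (ι ⊕ ι) R)
    (X₁ X₂ : ℤ → Matrix ι ν R) : Prop :=
  ∀ k, fromRows (ρ k * X₂ (k + 1)) (ρ (k - 1) * X₁ (k - 1)) = C k * fromRows (X₁ k) (X₂ k)

namespace SolvesRecursion

variable {ρ : ℤ → Matrix ι ι R} {C : ℤ → Matrix (ι ⊕ ι) (ι ⊕ ι) R}

theorem sub {X₁ X₂ Y₁ Y₂ : ℤ → Matrix ι ν R} (hX : SolvesRecursion ρ C X₁ X₂)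
    (hY : SolvesRecursion ρ C Y₁ Y₂) : SolvesRecursion ρ C (X₁ - Y₁) (X₂ - Y₂) := by
  intro k
  simpa only [Pi.sub_apply, Matrix.mul_sub, fromRows_sub] using congrArg₂ (· - ·) (hX k) (hY k)

theorem mul_right [Fintype ν] {X₁ X₂ : ℤ → Matrix ι ν R} (hX : SolvesRecursion ρ C X₁ X₂)
    (N : Matrix ν ν' R) : SolvesRecursion ρ C (fun k ↦ X₁ k * N) (fun k ↦ X₂ k * N) := by
  intro k
  simpa only [← Matrix.mul_assoc, ← fromRows_mul] using congrArg (· * N) (hX k)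

theorem fromCols {X₁ X₂ : ℤ → Matrix ι ν R} {Y₁ Y₂ : ℤ → Matrix ι ν' R}
    (hX : SolvesRecursion ρ C X₁ X₂) (hY : SolvesRecursion ρ C Y₁ Y₂) :
    SolvesRecursion ρ C (fun k ↦ fromCols (X₁ k) (Y₁ k)) (fun k ↦ fromCols (X₂ k) (Y₂ k)) := by
  intro k
  simp only [mul_fromCols, fromRows_fromCols_eq_fromCols_fromRows, hX k, hY k]

theorem blocks {X₁ X₂ : ℤ → Matrix ι ν R} (hX : SolvesRecursion ρ C X₁ X₂) (k : ℤ) :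
    ρ k * X₂ (k + 1) = (C k).toBlocks₁₁ * X₁ k + (C k).toBlocks₁₂ * X₂ k ∧
      ρ (k - 1) * X₁ (k - 1) = (C k).toBlocks₂₁ * X₁ k + (C k).toBlocks₂₂ * X₂ k := by
  rw [← fromRows_inj.eq_iff, hX k, ← fromBlocks_mul_fromRows, fromBlocks_toBlocks]

variable [DecidableEq ι] (hρ : ∀ k, IsUnit (ρ k)) (h₁₂ : ∀ k, IsUnit (C k).toBlocks₁₂)
  (h₂₁ : ∀ k, IsUnit (C k).toBlocks₂₁)
include hρ h₁₂ h₂₁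

theorem state_eq_zero_iff_succ {X₁ X₂ : ℤ → Matrix ι ν R} (hX : SolvesRecursion ρ C X₁ X₂)
    (k : ℤ) : fromRows (X₁ k) (X₂ (k + 1)) = 0 ↔ fromRows (X₁ (k + 1)) (X₂ (k + 1 + 1)) = 0 := by
  obtain ⟨h₁, h₂⟩ := hX.blocks (k + 1)
  rw [add_sub_cancel_right] at h₂
  simp only [← fromRows_zero, fromRows_inj.eq_iff]
  constructor
  · rintro ⟨hk, hk'⟩
    rw [hk, hk', Matrix.mul_zero, Matrix.mul_zero, add_zero] at h₂
    have hk₁ := eq_zero_of_isUnit_of_mul_eq_zero (h₂₁ _) h₂.symm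
    rw [hk₁, hk', Matrix.mul_zero, Matrix.mul_zero, add_zero] at h₁
    exact ⟨hk₁, eq_zero_of_isUnit_of_mul_eq_zero (hρ _) h₁⟩
  · rintro ⟨hk₁, hk₁'⟩
    rw [hk₁', Matrix.mul_zero, hk₁, Matrix.mul_zero, zero_add] at h₁
    have hk' := eq_zero_of_isUnit_of_mul_eq_zero (h₁₂ _) h₁.symm
    rw [hk₁, hk', Matrix.mul_zero, Matrix.mul_zero, add_zero] at h₂
    exact ⟨eq_zero_of_isUnit_of_mul_eq_zero (hρ _) h₂, hk'⟩

theorem state_eq_zero {X₁ X₂ : ℤ → Matrix ι ν R} (hX : SolvesRecursion ρ C X₁ X₂) {k₀ : ℤ}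
    (h₀ : fromRows (X₁ k₀) (X₂ (k₀ + 1)) = 0) (k : ℤ) : fromRows (X₁ k) (X₂ (k + 1)) = 0 := by
  induction k using Int.inductionOn' (b := k₀) with
  | zero => exact h₀
  | succ j _ hj => exact (hX.state_eq_zero_iff_succ hρ h₁₂ h₂₁ j).1 hj
  | pred j _ hj =>
    refine (hX.state_eq_zero_iff_succ hρ h₁₂ h₂₁ (j - 1)).2 ?_
    rwa [sub_add_cancel]

theorem state_eq {X₁ X₂ Y₁ Y₂ : ℤ → Matrix ι ν R} (hX : SolvesRecursion ρ C X₁ X₂)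
    (hY : SolvesRecursion ρ C Y₁ Y₂) {k₀ : ℤ}
    (h₀ : fromRows (X₁ k₀) (X₂ (k₀ + 1)) = fromRows (Y₁ k₀) (Y₂ (k₀ + 1))) (k : ℤ) :
    fromRows (X₁ k) (X₂ (k + 1)) = fromRows (Y₁ k) (Y₂ (k + 1)) := by
  rw [← sub_eq_zero, ← fromRows_sub] at h₀ ⊢
  exact (hX.sub hY).state_eq_zero hρ h₁₂ h₂₁ h₀ k

end SolvesRecursion

theorem fromCols_mul_fromBlocks_eq_fromCols [DecidableEq ι] {J : Matrix (ι ⊕ ι) (ι ⊕ ι) R}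
    (hJ : J * J = -1) {U : Matrix ι (ι ⊕ ι) R} {U' : Matrix (ι ⊕ ι) ι R} (h₁ : U * U' = 1)
    (h₂ : U * J * U' = 0) (G : Matrix (ι ⊕ ι) ι R) :
    fromCols U' (J * U') * fromBlocks (U * G) (U * J * G) (-(U * J * G)) (U * G) =
      fromCols G (J * G) := by
  have hJJ : ∀ X : Matrix (ι ⊕ ι) ι R, -(U * J) * (J * X) = U * X := by
    intro X
    rw [Matrix.neg_mul, Matrix.mul_assoc, ← Matrix.mul_assoc J, hJ, Matrix.neg_mul,
      Matrix.one_mul, Matrix.mul_neg, neg_neg]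
  have hinv : fromRows U (-(U * J)) * fromCols U' (J * U') = 1 := by
    rw [fromRows_mul_fromCols, hJJ, ← Matrix.mul_assoc, Matrix.neg_mul,
      h₁, h₂, neg_zero, fromBlocks_one]
  have hblocks : fromBlocks (U * G) (U * J * G) (-(U * J * G)) (U * G) =
      fromRows U (-(U * J)) * fromCols G (J * G) := by
    rw [fromRows_mul_fromCols, hJJ, ← Matrix.mul_assoc, Matrix.neg_mul]
  rw [hblocks, ← Matrix.mul_assoc,
    (fromCols_mul_fromRows_eq_one_comm (Equiv.refl _) _ _ _ _).2 hinv, Matrix.one_mul]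

theorem neg_inv_mul_eq_of_fromCols_eq [DecidableEq ι] {V W V' W' P Q M' : Matrix ι ι R}
    (h : fromCols V' W' = fromCols V W * fromBlocks P Q (-Q) P) (hW : IsUnit W)
    (hW' : IsUnit W') (hM' : M' = -(W'⁻¹ * V')) (hD : IsUnit (P + Q * M')) :
    -(W⁻¹ * V) = (-Q + P * M') * (P + Q * M')⁻¹ := by
  rw [fromCols_mul_fromBlocks, fromCols_inj.eq_iff] at h
  obtain ⟨rfl, rfl⟩ := h
  have hWM : (V * Q + W * P) * M' = -(V * P + W * -Q) := by
    rw [hM', Matrix.mul_neg, ← Matrix.mul_assoc,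
      mul_nonsing_inv _ ((isUnit_iff_isUnit_det _).mp hW'), Matrix.one_mul]
  have key : V * (P + Q * M') = -(W * (-Q + P * M')) := by
    rw [eq_neg_iff_add_eq_zero] at hWM ⊢
    rw [← hWM]
    noncomm_ring
  rw [← mul_nonsing_inv_cancel_right _ V ((isUnit_iff_isUnit_det _).mp hD), key, Matrix.neg_mul,
    Matrix.mul_neg, neg_neg, ← Matrix.mul_assoc, ← Matrix.mul_assoc,
    nonsing_inv_mul _ ((isUnit_iff_isUnit_det _).mp hW), Matrix.one_mul]

end Matrix

theorem Jmat_mul_self (m : ℕ) : Jmat m * Jmat m = -1 := by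
  rw [Jmat, fromBlocks_multiply, ← fromBlocks_one, fromBlocks_neg]
  simp

theorem stmt10_general {m : ℕ} (ρ : ℤ → Matrix (Fin m) (Fin m) ℂ)
    (A B : ℤ → Matrix (Fin m ⊕ Fin m) (Fin m ⊕ Fin m) ℂ)
    (hρ : ∀ k, (ρ k).PosDef)
    (z : ℂ)
    (hinv12 : ∀ k : ℤ, IsUnit ((z • A k + B k).toBlocks₁₂))
    (hinv21 : ∀ k : ℤ, IsUnit ((z • A k + B k).toBlocks₂₁))
    (k₀ ℓ : ℤ)
    (α γ β : Matrix (Fin m) (Fin m ⊕ Fin m) ℂ)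
    (hα1 : α * αᴴ = 1) (hα2 : α * Jmat m * αᴴ = 0)
    (Θα₁ Θα₂ Φα₁ Φα₂ Θγ₁ Θγ₂ Φγ₁ Φγ₂ : ℤ → Matrix (Fin m) (Fin m) ℂ)
    (hsolΘα : ∀ k : ℤ, fromRows (ρ k * Θα₂ (k + 1)) (ρ (k - 1) * Θα₁ (k - 1))
        = (z • A k + B k) * fromRows (Θα₁ k) (Θα₂ k))
    (hsolΦα : ∀ k : ℤ, fromRows (ρ k * Φα₂ (k + 1)) (ρ (k - 1) * Φα₁ (k - 1))
        = (z • A k + B k) * fromRows (Φα₁ k) (Φα₂ k))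
    (hsolΘγ : ∀ k : ℤ, fromRows (ρ k * Θγ₂ (k + 1)) (ρ (k - 1) * Θγ₁ (k - 1))
        = (z • A k + B k) * fromRows (Θγ₁ k) (Θγ₂ k))
    (hsolΦγ : ∀ k : ℤ, fromRows (ρ k * Φγ₂ (k + 1)) (ρ (k - 1) * Φγ₁ (k - 1))
        = (z • A k + B k) * fromRows (Φγ₁ k) (Φγ₂ k))
    (hnormα : fromCols (fromRows (Θα₁ k₀) (Θα₂ (k₀ + 1))) (fromRows (Φα₁ k₀) (Φα₂ (k₀ + 1)))
        = (fromBlocks (hρ k₀).posSemidef.sqrt 0 0 (hρ k₀).posSemidef.sqrt)⁻¹ *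
          fromCols αᴴ (Jmat m * αᴴ))
    (hnormγ : fromCols (fromRows (Θγ₁ k₀) (Θγ₂ (k₀ + 1))) (fromRows (Φγ₁ k₀) (Φγ₂ (k₀ + 1)))
        = (fromBlocks (hρ k₀).posSemidef.sqrt 0 0 (hρ k₀).posSemidef.sqrt)⁻¹ *
          fromCols γᴴ (Jmat m * γᴴ))
    (Mα Mγ : Matrix (Fin m) (Fin m) ℂ)
    (hMα : Mα = -((β * fromBlocks (hρ ℓ).posSemidef.sqrt 0 0 (hρ ℓ).posSemidef.sqrt *
          fromRows (Φα₁ ℓ) (Φα₂ (ℓ + 1)))⁻¹ *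
        (β * fromBlocks (hρ ℓ).posSemidef.sqrt 0 0 (hρ ℓ).posSemidef.sqrt *
          fromRows (Θα₁ ℓ) (Θα₂ (ℓ + 1)))))
    (hMγ : Mγ = -((β * fromBlocks (hρ ℓ).posSemidef.sqrt 0 0 (hρ ℓ).posSemidef.sqrt *
          fromRows (Φγ₁ ℓ) (Φγ₂ (ℓ + 1)))⁻¹ *
        (β * fromBlocks (hρ ℓ).posSemidef.sqrt 0 0 (hρ ℓ).posSemidef.sqrt *
          fromRows (Θγ₁ ℓ) (Θγ₂ (ℓ + 1)))))
    (huα : IsUnit (β * fromBlocks (hρ ℓ).posSemidef.sqrt 0 0 (hρ ℓ).posSemidef.sqrt *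
        fromRows (Φα₁ ℓ) (Φα₂ (ℓ + 1))))
    (huγ : IsUnit (β * fromBlocks (hρ ℓ).posSemidef.sqrt 0 0 (hρ ℓ).posSemidef.sqrt *
        fromRows (Φγ₁ ℓ) (Φγ₂ (ℓ + 1))))
    (hX : IsUnit (α * γᴴ + α * Jmat m * γᴴ * Mγ)) :
    Mα = (-(α * Jmat m * γᴴ) + α * γᴴ * Mγ) * (α * γᴴ + α * Jmat m * γᴴ * Mγ)⁻¹ := by
  set T := fromBlocks (α * γᴴ) (α * Jmat m * γᴴ) (-(α * Jmat m * γᴴ)) (α * γᴴ)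
  have hΨα : SolvesRecursion ρ (fun k ↦ z • A k + B k) (fun k ↦ fromCols (Θα₁ k) (Φα₁ k) * T)
      (fun k ↦ fromCols (Θα₂ k) (Φα₂ k) * T) :=
    (SolvesRecursion.fromCols hsolΘα hsolΦα).mul_right T
  have hΨγ : SolvesRecursion ρ (fun k ↦ z • A k + B k) (fun k ↦ fromCols (Θγ₁ k) (Φγ₁ k))
      (fun k ↦ fromCols (Θγ₂ k) (Φγ₂ k)) :=
    SolvesRecursion.fromCols hsolΘγ hsolΦγ
  have hstate₀ : fromRows (fromCols (Θγ₁ k₀) (Φγ₁ k₀)) (fromCols (Θγ₂ (k₀ + 1)) (Φγ₂ (k₀ + 1))) =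
      fromRows (fromCols (Θα₁ k₀) (Φα₁ k₀) * T) (fromCols (Θα₂ (k₀ + 1)) (Φα₂ (k₀ + 1)) * T) := by
    rw [← fromRows_mul, fromRows_fromCols_eq_fromCols_fromRows,
      fromRows_fromCols_eq_fromCols_fromRows, hnormγ, hnormα, Matrix.mul_assoc,
      fromCols_mul_fromBlocks_eq_fromCols (Jmat_mul_self m) hα1 hα2]
  have hstateℓ := hΨγ.state_eq (fun k ↦ (hρ k).isUnit) hinv12 hinv21 hΨα hstate₀ ℓ
  rw [hMα]
  refine neg_inv_mul_eq_of_fromCols_eq ?_ huα huγ hMγ hX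
  rw [← mul_fromCols, ← mul_fromCols, Matrix.mul_assoc, ← fromRows_fromCols_eq_fromCols_fromRows,
    ← fromRows_fromCols_eq_fromCols_fromRows, hstateℓ, ← fromRows_mul]
  simp only [Matrix.mul_assoc, T]

/-- Linear fractional transformation of M-functions under change of
boundary condition at k₀: with fundamental solutions Ψ_α̃, Ψ_γ̃ normalized by
Ψ̂(z,k₀) = I_ρ(k₀)^{-1/2}(α* Jα*) resp. (γ* Jγ*), and the same β̃ boundary data at ℓ,
M_α̃ = [−αJγ* + αγ* M_γ̃][αγ* + αJγ* M_γ̃]^{-1}. -/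
theorem stmt10 {m : ℕ} (ρ : ℤ → Matrix (Fin m) (Fin m) ℂ)
    (A B : ℤ → Matrix (Fin m ⊕ Fin m) (Fin m ⊕ Fin m) ℂ)
    (hρ : ∀ k, (ρ k).PosDef) (hA : ∀ k, (A k).PosSemidef) (hB : ∀ k, (B k)ᴴ = B k)
    (z : ℂ)
    (hinv12 : ∀ k : ℤ, IsUnit ((z • A k + B k).toBlocks₁₂))
    (hinv21 : ∀ k : ℤ, IsUnit ((z • A k + B k).toBlocks₂₁))
    (k₀ ℓ : ℤ) (hℓ : ℓ ≠ k₀)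
    (α γ β : Matrix (Fin m) (Fin m ⊕ Fin m) ℂ)
    (hα1 : α * αᴴ = 1) (hα2 : α * Jmat m * αᴴ = 0)
    (hγ1 : γ * γᴴ = 1) (hγ2 : γ * Jmat m * γᴴ = 0)
    (Θα₁ Θα₂ Φα₁ Φα₂ Θγ₁ Θγ₂ Φγ₁ Φγ₂ : ℤ → Matrix (Fin m) (Fin m) ℂ)
    (hsolΘα : ∀ k : ℤ, fromRows (ρ k * Θα₂ (k + 1)) (ρ (k - 1) * Θα₁ (k - 1))
        = (z • A k + B k) * fromRows (Θα₁ k) (Θα₂ k))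
    (hsolΦα : ∀ k : ℤ, fromRows (ρ k * Φα₂ (k + 1)) (ρ (k - 1) * Φα₁ (k - 1))
        = (z • A k + B k) * fromRows (Φα₁ k) (Φα₂ k))
    (hsolΘγ : ∀ k : ℤ, fromRows (ρ k * Θγ₂ (k + 1)) (ρ (k - 1) * Θγ₁ (k - 1))
        = (z • A k + B k) * fromRows (Θγ₁ k) (Θγ₂ k))
    (hsolΦγ : ∀ k : ℤ, fromRows (ρ k * Φγ₂ (k + 1)) (ρ (k - 1) * Φγ₁ (k - 1))
        = (z • A k + B k) * fromRows (Φγ₁ k) (Φγ₂ k))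
    (hnormα : fromCols (fromRows (Θα₁ k₀) (Θα₂ (k₀ + 1))) (fromRows (Φα₁ k₀) (Φα₂ (k₀ + 1)))
        = (fromBlocks (hρ k₀).posSemidef.sqrt 0 0 (hρ k₀).posSemidef.sqrt)⁻¹ *
          fromCols αᴴ (Jmat m * αᴴ))
    (hnormγ : fromCols (fromRows (Θγ₁ k₀) (Θγ₂ (k₀ + 1))) (fromRows (Φγ₁ k₀) (Φγ₂ (k₀ + 1)))
        = (fromBlocks (hρ k₀).posSemidef.sqrt 0 0 (hρ k₀).posSemidef.sqrt)⁻¹ *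
          fromCols γᴴ (Jmat m * γᴴ))
    (Mα Mγ : Matrix (Fin m) (Fin m) ℂ)
    (hMα : Mα = -((β * fromBlocks (hρ ℓ).posSemidef.sqrt 0 0 (hρ ℓ).posSemidef.sqrt *
          fromRows (Φα₁ ℓ) (Φα₂ (ℓ + 1)))⁻¹ *
        (β * fromBlocks (hρ ℓ).posSemidef.sqrt 0 0 (hρ ℓ).posSemidef.sqrt *
          fromRows (Θα₁ ℓ) (Θα₂ (ℓ + 1)))))
    (hMγ : Mγ = -((β * fromBlocks (hρ ℓ).posSemidef.sqrt 0 0 (hρ ℓ).posSemidef.sqrt *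
          fromRows (Φγ₁ ℓ) (Φγ₂ (ℓ + 1)))⁻¹ *
        (β * fromBlocks (hρ ℓ).posSemidef.sqrt 0 0 (hρ ℓ).posSemidef.sqrt *
          fromRows (Θγ₁ ℓ) (Θγ₂ (ℓ + 1)))))
    (huα : IsUnit (β * fromBlocks (hρ ℓ).posSemidef.sqrt 0 0 (hρ ℓ).posSemidef.sqrt *
        fromRows (Φα₁ ℓ) (Φα₂ (ℓ + 1))))
    (huγ : IsUnit (β * fromBlocks (hρ ℓ).posSemidef.sqrt 0 0 (hρ ℓ).posSemidef.sqrt *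
        fromRows (Φγ₁ ℓ) (Φγ₂ (ℓ + 1))))
    (hX : IsUnit (α * γᴴ + α * Jmat m * γᴴ * Mγ)) :
    Mα = (-(α * Jmat m * γᴴ) + α * γᴴ * Mγ) * (α * γᴴ + α * Jmat m * γᴴ * Mγ)⁻¹ :=
  stmt10_general ρ A B hρ z hinv12 hinv21 k₀ ℓ α γ β hα1 hα2 Θα₁ Θα₂ Φα₁ Φα₂ Θγ₁ Θγ₂ Φγ₁ Φγ₂ hsolΘα
    hsolΦα hsolΘγ hsolΦγ hnormα hnormγ Mα Mγ hMα hMγ huα huγ hX
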